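/- For every integer L ≥ 1 and every 2L-tuple of fields v on ZMod N × ZMod M, there exists a unique zero-mean image u (i.e., Σ_{n,m} u(n,m) = 0) minimizing ‖∇_L u − v‖² = Σ_{k=0}^{L−1} Σ_{n,m} ( ((∇_L u)_x^k − v_x^k)(n,m)² + ((∇_L u)_y^k − v_y^k)(n,m)² ) over all zero-mean images, and a zero-mean image u is this minimizer if and only if it satisfies the normal equation L · div(∇u) = div_L(v). -/

import Mathlib

open Real

/-- Periodic discrete partial difference in the first (column) direction. -/
def gradX {N M : ℕ} (f : ZMod N × ZMod M → ℝ) : ZMod N × ZMod M → ℝ :=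
  fun p => f p - f (p.1 - 1, p.2)

/-- Periodic discrete partial difference in the second (row) direction. -/
def gradY {N M : ℕ} (f : ZMod N × ZMod M → ℝ) : ZMod N × ZMod M → ℝ :=
  fun p => f p - f (p.1, p.2 - 1)

/-- Periodic discrete divergence of a pair of fields `(vx, vy)`. -/
def divg {N M : ℕ} (vx vy : ZMod N × ZMod M → ℝ) : ZMod N × ZMod M → ℝ :=
  fun p => vx (p.1 + 1, p.2) - vx p + (vy (p.1, p.2 + 1) - vy p)

/-- `x`-component of the multidirectional gradient in direction `θ_k = πk/(2L)`. -/
noncomputable def mgX {N M : ℕ} (L : ℕ) (u : ZMod N × ZMod M → ℝ) (k : Fin L) :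
    ZMod N × ZMod M → ℝ :=
  fun p => Real.cos (π * (k : ℝ) / (2 * (L : ℝ))) * gradX u p +
    Real.sin (π * (k : ℝ) / (2 * (L : ℝ))) * gradY u p

/-- `y`-component of the multidirectional gradient in direction `θ_k = πk/(2L)`. -/
noncomputable def mgY {N M : ℕ} (L : ℕ) (u : ZMod N × ZMod M → ℝ) (k : Fin L) :
    ZMod N × ZMod M → ℝ :=
  fun p => Real.cos (π * (k : ℝ) / (2 * (L : ℝ))) * gradY u p -
    Real.sin (π * (k : ℝ) / (2 * (L : ℝ))) * gradX u p

/-- Multidirectional divergence of a `2L`-tuple of fields. -/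
noncomputable def divL {N M : ℕ} (L : ℕ)
    (vx vy : Fin L → ZMod N × ZMod M → ℝ) : ZMod N × ZMod M → ℝ :=
  divg
    (fun p => ∑ k : Fin L,
      (Real.cos (π * (k : ℝ) / (2 * (L : ℝ))) * vx k p -
        Real.sin (π * (k : ℝ) / (2 * (L : ℝ))) * vy k p))
    (fun p => ∑ k : Fin L,
      (Real.sin (π * (k : ℝ) / (2 * (L : ℝ))) * vx k p +
        Real.cos (π * (k : ℝ) / (2 * (L : ℝ))) * vy k p))

/-- The squared distance `‖∇_L u − v‖²` between the multidirectional gradient of `u`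
and a `2L`-tuple of fields `v = (vx, vy)`. -/
noncomputable def Phi {N M : ℕ} [NeZero N] [NeZero M] (L : ℕ)
    (vx vy : Fin L → ZMod N × ZMod M → ℝ) (u : ZMod N × ZMod M → ℝ) : ℝ :=
  ∑ k : Fin L, ∑ p : ZMod N × ZMod M,
    ((mgX L u k p - vx k p) ^ 2 + (mgY L u k p - vy k p) ^ 2)

/-!
Write `Δ = div ∘ ∇` and `⟨f, g⟩ = ∑ f g`. Summation by parts makes `-div_L` the adjoint of `∇_L`,
and since each direction of `∇_L` is a rotation of `∇`, `‖∇_L h‖² = L ‖∇h‖²` and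
`div_L ∇_L = L Δ`. Hence
`Φ(u + h) = Φ(u) + L ‖∇h‖² + 2 ⟨h, div_L v - L Δu⟩`,
so a zero-mean `u` is a minimiser exactly when the linear term vanishes on zero-mean `h`, which
(as `div_L v - L Δu` is itself zero-mean) is the normal equation. On zero-mean images `Δ` is
injective, because `Δu = 0` forces `‖∇u‖² = -⟨u, Δu⟩ = 0`, so `u` is constant, hence `0`; by finite
dimensionality it is then also surjective, which gives existence and uniqueness.
-/

theorem ZMod.apply_eq_apply_zero_of_forall_add_one {n : ℕ} [NeZero n] {α : Type*}
    (f : ZMod n → α) (h : ∀ x, f (x + 1) = f x) (x : ZMod n) : f x = f 0 := by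
  have hnat : ∀ k : ℕ, f k = f 0 := by
    intro k
    induction k with
    | zero => simp
    | succ k ih => rw [Nat.cast_succ, h, ih]
  simpa using hnat x.val

section
variable {N M L : ℕ}

variable (N M) in
def laplacian : (ZMod N × ZMod M → ℝ) →ₗ[ℝ] (ZMod N × ZMod M → ℝ) where
  toFun u := divg (gradX u) (gradY u)
  map_add' u v := by funext p; simp only [divg, gradX, gradY, Pi.add_apply]; ring
  map_smul' c u := by
    funext p; simp only [divg, gradX, gradY, Pi.smul_apply, smul_eq_mul, RingHom.id_apply]; ring

theorem laplacian_apply (u : ZMod N × ZMod M → ℝ) :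
    laplacian N M u = divg (gradX u) (gradY u) := rfl

theorem mgX_add (u h : ZMod N × ZMod M → ℝ) (k : Fin L) (p : ZMod N × ZMod M) :
    mgX L (u + h) k p = mgX L u k p + mgX L h k p := by
  simp only [mgX, gradX, gradY, Pi.add_apply]; ring

theorem mgY_add (u h : ZMod N × ZMod M → ℝ) (k : Fin L) (p : ZMod N × ZMod M) :
    mgY L (u + h) k p = mgY L u k p + mgY L h k p := by
  simp only [mgY, gradX, gradY, Pi.add_apply]; ring

theorem mgX_sq_add_mgY_sq (u : ZMod N × ZMod M → ℝ) (k : Fin L) (p : ZMod N × ZMod M) :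
    mgX L u k p ^ 2 + mgY L u k p ^ 2 = gradX u p ^ 2 + gradY u p ^ 2 := by
  simp only [mgX, mgY]
  linear_combination (gradX u p ^ 2 + gradY u p ^ 2) * sin_sq_add_cos_sq (π * k / (2 * L))

theorem cos_mul_mgX_sub_sin_mul_mgY (u : ZMod N × ZMod M → ℝ) (k : Fin L)
    (p : ZMod N × ZMod M) :
    cos (π * k / (2 * L)) * mgX L u k p - sin (π * k / (2 * L)) * mgY L u k p = gradX u p := by
  simp only [mgX, mgY]
  linear_combination gradX u p * sin_sq_add_cos_sq (π * k / (2 * L))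

theorem sin_mul_mgX_add_cos_mul_mgY (u : ZMod N × ZMod M → ℝ) (k : Fin L)
    (p : ZMod N × ZMod M) :
    sin (π * k / (2 * L)) * mgX L u k p + cos (π * k / (2 * L)) * mgY L u k p = gradY u p := by
  simp only [mgX, mgY]
  linear_combination gradY u p * sin_sq_add_cos_sq (π * k / (2 * L))

theorem divL_mgX_mgY (u : ZMod N × ZMod M → ℝ) :
    divL L (mgX L u) (mgY L u) = (L : ℝ) • laplacian N M u := by
  funext p
  simp only [divL, divg, cos_mul_mgX_sub_sin_mul_mgY, sin_mul_mgX_add_cos_mul_mgY,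
    Finset.sum_const, Finset.card_univ, Fintype.card_fin, nsmul_eq_mul, laplacian_apply,
    Pi.smul_apply, smul_eq_mul]
  ring

theorem divL_sub (ax ay bx b_y : Fin L → ZMod N × ZMod M → ℝ) :
    divL L (ax - bx) (ay - b_y) = divL L ax ay - divL L bx b_y := by
  funext p
  simp only [divL, divg, Pi.sub_apply, ← Finset.sum_sub_distrib, ← Finset.sum_add_distrib]
  exact Finset.sum_congr rfl fun k _ => by ring

end

section
variable {N M : ℕ} [NeZero N] [NeZero M]

theorem sum_comp_add_one_fst {R : Type*} [AddCommMonoid R] (f : ZMod N × ZMod M → R) :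
    ∑ p : ZMod N × ZMod M, f (p.1 + 1, p.2) = ∑ p, f p :=
  ((Equiv.addRight (1 : ZMod N)).prodCongr (Equiv.refl _)).sum_comp f

theorem sum_comp_add_one_snd {R : Type*} [AddCommMonoid R] (f : ZMod N × ZMod M → R) :
    ∑ p : ZMod N × ZMod M, f (p.1, p.2 + 1) = ∑ p, f p :=
  ((Equiv.refl _).prodCongr (Equiv.addRight (1 : ZMod M))).sum_comp f

theorem sum_divg (wx wy : ZMod N × ZMod M → ℝ) : ∑ p, divg wx wy p = 0 := by
  simp only [divg, Finset.sum_add_distrib, Finset.sum_sub_distrib, sum_comp_add_one_fst wx,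
    sum_comp_add_one_snd wy, sub_self, add_zero]

theorem dotProduct_divg (u wx wy : ZMod N × ZMod M → ℝ) :
    u ⬝ᵥ divg wx wy = -(gradX u ⬝ᵥ wx + gradY u ⬝ᵥ wy) := by
  have hx : ∑ p : ZMod N × ZMod M, u p * wx (p.1 + 1, p.2) = ∑ p, u (p.1 - 1, p.2) * wx p := by
    simpa using sum_comp_add_one_fst fun p : ZMod N × ZMod M => u (p.1 - 1, p.2) * wx p
  have hy : ∑ p : ZMod N × ZMod M, u p * wy (p.1, p.2 + 1) = ∑ p, u (p.1, p.2 - 1) * wy p := by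
    simpa using sum_comp_add_one_snd fun p : ZMod N × ZMod M => u (p.1, p.2 - 1) * wy p
  simp only [dotProduct, gradX, gradY, divg, sub_mul, mul_sub, mul_add, Finset.sum_sub_distrib,
    Finset.sum_add_distrib, hx, hy]
  ring

def dirichletEnergy (u : ZMod N × ZMod M → ℝ) : ℝ :=
  ∑ p, (gradX u p ^ 2 + gradY u p ^ 2)

theorem dirichletEnergy_nonneg (u : ZMod N × ZMod M → ℝ) : 0 ≤ dirichletEnergy u :=
  Finset.sum_nonneg fun _ _ => by positivity

theorem dirichletEnergy_smul (t : ℝ) (u : ZMod N × ZMod M → ℝ) :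
    dirichletEnergy (t • u) = t ^ 2 * dirichletEnergy u := by
  simp only [dirichletEnergy, gradX, gradY, Pi.smul_apply, smul_eq_mul, Finset.mul_sum]
  exact Finset.sum_congr rfl fun _ _ => by ring

theorem dirichletEnergy_eq_neg_dotProduct_laplacian (u : ZMod N × ZMod M → ℝ) :
    dirichletEnergy u = -(u ⬝ᵥ laplacian N M u) := by
  rw [laplacian_apply, dotProduct_divg, neg_neg]
  simp only [dotProduct, dirichletEnergy, sq, Finset.sum_add_distrib]

theorem gradX_eq_zero_and_gradY_eq_zero_of_dirichletEnergy_eq_zero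
    {u : ZMod N × ZMod M → ℝ} (h : dirichletEnergy u = 0) : gradX u = 0 ∧ gradY u = 0 := by
  have hp : ∀ p, gradX u p ^ 2 = 0 ∧ gradY u p ^ 2 = 0 := fun p =>
    (add_eq_zero_iff_of_nonneg (sq_nonneg _) (sq_nonneg _)).1 <|
      (Finset.sum_eq_zero_iff_of_nonneg fun _ _ => by positivity).1 h p (Finset.mem_univ p)
  exact ⟨funext fun p => pow_eq_zero_iff two_ne_zero |>.1 (hp p).1,
    funext fun p => pow_eq_zero_iff two_ne_zero |>.1 (hp p).2⟩

theorem eq_const_of_gradX_eq_zero_of_gradY_eq_zero {u : ZMod N × ZMod M → ℝ}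
    (hx : gradX u = 0) (hy : gradY u = 0) (p : ZMod N × ZMod M) : u p = u 0 := by
  have hx' : ∀ a b, u (a + 1, b) = u (a, b) := fun a b => by
    simpa [gradX, sub_eq_zero] using congrFun hx (a + 1, b)
  have hy' : ∀ a b, u (a, b + 1) = u (a, b) := fun a b => by
    simpa [gradY, sub_eq_zero] using congrFun hy (a, b + 1)
  calc u p = u (0, p.2) := ZMod.apply_eq_apply_zero_of_forall_add_one (u ⟨·, p.2⟩) (hx' · _) p.1
    _ = u (0, 0) := ZMod.apply_eq_apply_zero_of_forall_add_one (u ⟨0, ·⟩) (hy' _) p.2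

variable (N M) in
def zeroMean : Submodule ℝ (ZMod N × ZMod M → ℝ) where
  carrier := {u | ∑ p, u p = 0}
  add_mem' hu hv := by simp_all [Finset.sum_add_distrib]
  zero_mem' := by simp
  smul_mem' c u hu := by simp_all [← Finset.mul_sum]

theorem eq_zero_of_mem_zeroMean_of_forall_eq_const {u : ZMod N × ZMod M → ℝ}
    (hu : u ∈ zeroMean N M) (hc : ∀ p, u p = u 0) : u = 0 := by
  have hsum : (Fintype.card (ZMod N × ZMod M) : ℝ) * u 0 = 0 := by
    rw [← hu, Finset.sum_congr rfl fun p _ => hc p]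
    simp
  have hu0 : u 0 = 0 :=
    (mul_eq_zero.1 hsum).resolve_left (Nat.cast_ne_zero.2 Fintype.card_ne_zero)
  funext p
  rw [hc p, hu0, Pi.zero_apply]

theorem laplacian_mem_zeroMean (u : ZMod N × ZMod M → ℝ) : laplacian N M u ∈ zeroMean N M :=
  sum_divg _ _

theorem eq_zero_of_mem_zeroMean_of_laplacian_eq_zero {u : ZMod N × ZMod M → ℝ}
    (hu : u ∈ zeroMean N M) (h : laplacian N M u = 0) : u = 0 := by
  have hE : dirichletEnergy u = 0 := by
    rw [dirichletEnergy_eq_neg_dotProduct_laplacian, h, dotProduct_zero, neg_zero]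
  obtain ⟨hx, hy⟩ := gradX_eq_zero_and_gradY_eq_zero_of_dirichletEnergy_eq_zero hE
  exact eq_zero_of_mem_zeroMean_of_forall_eq_const hu
    (eq_const_of_gradX_eq_zero_of_gradY_eq_zero hx hy)

theorem eq_of_laplacian_eq {u w : ZMod N × ZMod M → ℝ} (hu : u ∈ zeroMean N M)
    (hw : w ∈ zeroMean N M) (h : laplacian N M u = laplacian N M w) : u = w :=
  sub_eq_zero.1 <| eq_zero_of_mem_zeroMean_of_laplacian_eq_zero (sub_mem hu hw) <| by
    rw [map_sub, h, sub_self]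

theorem exists_mem_zeroMean_laplacian_eq {d : ZMod N × ZMod M → ℝ} (hd : d ∈ zeroMean N M) :
    ∃ u ∈ zeroMean N M, laplacian N M u = d := by
  let T := (laplacian N M).restrict fun u (_ : u ∈ zeroMean N M) => laplacian_mem_zeroMean u
  have hT : Function.Surjective T := LinearMap.injective_iff_surjective.1 fun u w h =>
    Subtype.ext <| eq_of_laplacian_eq u.2 w.2 <| congrArg Subtype.val h
  obtain ⟨u, hu⟩ := hT ⟨d, hd⟩
  exact ⟨u, u.2, congrArg Subtype.val hu⟩

end

section
variable {N M L : ℕ} [NeZero N] [NeZero M]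

theorem divL_mem_zeroMean (vx vy : Fin L → ZMod N × ZMod M → ℝ) :
    divL L vx vy ∈ zeroMean N M :=
  sum_divg _ _

theorem sum_sum_mgX_sq_add_mgY_sq (u : ZMod N × ZMod M → ℝ) :
    ∑ k : Fin L, ∑ p, (mgX L u k p ^ 2 + mgY L u k p ^ 2) = L * dirichletEnergy u := by
  simp [mgX_sq_add_mgY_sq, dirichletEnergy]

theorem sum_sum_mgX_mul_add_mgY_mul (h : ZMod N × ZMod M → ℝ)
    (wx wy : Fin L → ZMod N × ZMod M → ℝ) :
    ∑ k : Fin L, ∑ p, (mgX L h k p * wx k p + mgY L h k p * wy k p) =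
      -(h ⬝ᵥ divL L wx wy) := by
  rw [divL, dotProduct_divg, Finset.sum_comm]
  simp only [dotProduct, neg_neg, Finset.mul_sum, ← Finset.sum_add_distrib]
  refine Finset.sum_congr rfl fun p _ => Finset.sum_congr rfl fun k _ => ?_
  simp only [mgX, mgY]
  ring

theorem Phi_add (vx vy : Fin L → ZMod N × ZMod M → ℝ) (u h : ZMod N × ZMod M → ℝ) :
    Phi L vx vy (u + h) = Phi L vx vy u + L * dirichletEnergy h +
      2 * (h ⬝ᵥ (divL L vx vy - (L : ℝ) • laplacian N M u)) := by
  calc Phi L vx vy (u + h)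
      = Phi L vx vy u + ∑ k : Fin L, ∑ p, (mgX L h k p ^ 2 + mgY L h k p ^ 2) +
          2 * ∑ k : Fin L, ∑ p, (mgX L h k p * (mgX L u - vx) k p +
            mgY L h k p * (mgY L u - vy) k p) := by
        simp only [Phi, mgX_add, mgY_add, Pi.sub_apply, Finset.mul_sum,
          ← Finset.sum_add_distrib]
        exact Finset.sum_congr rfl fun k _ => Finset.sum_congr rfl fun p _ => by ring
    _ = _ := by
        rw [sum_sum_mgX_sq_add_mgY_sq, sum_sum_mgX_mul_add_mgY_mul, divL_sub, divL_mgX_mgY,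
          dotProduct_sub, dotProduct_sub]
        ring

theorem forall_Phi_le_iff (vx vy : Fin L → ZMod N × ZMod M → ℝ) {u : ZMod N × ZMod M → ℝ}
    (hu : u ∈ zeroMean N M) :
    (∀ w ∈ zeroMean N M, Phi L vx vy u ≤ Phi L vx vy w) ↔
      (L : ℝ) • laplacian N M u = divL L vx vy := by
  rw [eq_comm, ← sub_eq_zero]
  constructor
  · intro hmin
    set e := divL L vx vy - (L : ℝ) • laplacian N M u
    have he : e ∈ zeroMean N M :=
      sub_mem (divL_mem_zeroMean vx vy) (Submodule.smul_mem _ _ (laplacian_mem_zeroMean u))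
    have hquad : ∀ t : ℝ, 0 ≤ (L * dirichletEnergy e) * (t * t) + 2 * (e ⬝ᵥ e) * t + 0 := by
      intro t
      have := hmin (u + t • e) (add_mem hu (Submodule.smul_mem _ t he))
      rw [Phi_add, dirichletEnergy_smul, smul_dotProduct, smul_eq_mul] at this
      linarith
    have hdisc := discrim_le_zero hquad
    rw [discrim] at hdisc
    exact dotProduct_self_eq_zero.1 (by nlinarith)
  · intro he w _
    have := Phi_add vx vy u (w - u)
    rw [add_sub_cancel, he, dotProduct_zero] at this
    nlinarith [dirichletEnergy_nonneg (w - u)]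

end

theorem stmt14 {N M : ℕ} [NeZero N] [NeZero M] (L : ℕ) (hL : 1 ≤ L)
    (vx vy : Fin L → ZMod N × ZMod M → ℝ) :
    (∃! u : ZMod N × ZMod M → ℝ,
        (∑ p : ZMod N × ZMod M, u p) = 0 ∧
        ∀ w : ZMod N × ZMod M → ℝ, (∑ p : ZMod N × ZMod M, w p) = 0 →
          Phi L vx vy u ≤ Phi L vx vy w) ∧
    (∀ u : ZMod N × ZMod M → ℝ, (∑ p : ZMod N × ZMod M, u p) = 0 →
      ((∀ w : ZMod N × ZMod M → ℝ, (∑ p : ZMod N × ZMod M, w p) = 0 →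
          Phi L vx vy u ≤ Phi L vx vy w) ↔
        ∀ p : ZMod N × ZMod M,
          (L : ℝ) * divg (gradX u) (gradY u) p = divL L vx vy p)) := by
  have hL0 : (L : ℝ) ≠ 0 := Nat.cast_ne_zero.2 (by omega)
  refine ⟨?_, fun u hu => (forall_Phi_le_iff vx vy hu).trans funext_iff⟩
  obtain ⟨u, hu, hΔu⟩ := exists_mem_zeroMean_laplacian_eq
    (Submodule.smul_mem _ (L : ℝ)⁻¹ (divL_mem_zeroMean vx vy))
  have hnormal : (L : ℝ) • laplacian N M u = divL L vx vy := by rw [hΔu, smul_inv_smul₀ hL0]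
  refine ⟨u, ⟨hu, (forall_Phi_le_iff vx vy hu).2 hnormal⟩, fun w ⟨hw, hmin⟩ => ?_⟩
  refine eq_of_laplacian_eq hw hu (smul_right_injective _ hL0 ?_)
  exact ((forall_Phi_le_iff vx vy hw).1 hmin).trans hnormal.symm
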